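/- arXiv:math/0005147 — 2 statements merged into one kernel-verified Lean document; each statement's English description precedes it below -/
import Mathlib

section
/- Let β, γ ∈ (0,1] with β + γ > 1, T > 0, and suppose g : [0,T] → ℝ satisfies |g(t₂) − g(t₁)| ≤ L|t₂ − t₁|^γ for all t₁, t₂. Let X ∈ C^β([0,T]) with norm ‖X‖_β = max|X| + max_{t₁≠t₂} |X(t₂)−X(t₁)|/|t₂−t₁|^β. Then for all 0 ≤ s ≤ t ≤ T, |∫ₛᵗ X dg| ≤ L ‖X‖_β (t−s)^γ (1 + (t−s)^β / (2^{β+γ} − 2)). -/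
open Set Finset

/-- Left-endpoint Riemann–Stieltjes sum. -/
noncomputable def RSsum (f g : ℝ → ℝ) (n : ℕ) (t : Fin (n + 1) → ℝ) : ℝ :=
  ∑ i : Fin n, f (t i.castSucc) * (g (t i.succ) - g (t i.castSucc))

/-- `I` is the Riemann–Stieltjes integral `∫_a^b f dg`. -/
def IsRSIntegral (f g : ℝ → ℝ) (a b I : ℝ) : Prop :=
  ∀ ε > 0, ∃ δ > 0, ∀ (n : ℕ) (t : Fin (n + 1) → ℝ),
    Monotone t → t 0 = a → t (Fin.last n) = b →
    (∀ i : Fin n, t i.succ - t i.castSucc < δ) →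
    |RSsum f g n t - I| < ε

private lemma sum_range_two_mul' (n : ℕ) (f : ℕ → ℝ) :
    ∑ i ∈ range (2 * n), f i = ∑ i ∈ range n, (f (2 * i) + f (2 * i + 1)) := by
  induction n with
  | zero => simp
  | succ n ih =>
    have : 2 * (n + 1) = (2 * n + 1) + 1 := by ring
    rw [this, Finset.sum_range_succ, Finset.sum_range_succ, ih, Finset.sum_range_succ]
    ring

/-- Sup-norm bound for the Young–Stieltjes integral: if `g` is `γ`-Hölder with
constant `L` on `[0,T]` and `X` has sup norm at most `N₁` and `β`-Hölder
seminorm at most `N₂` on `[0,T]` (so that `‖X‖_β ≤ N₁ + N₂`), then for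
`0 ≤ s ≤ t ≤ T`,
`|∫ₛᵗ X dg| ≤ L (N₁+N₂) (t−s)^γ (1 + (t−s)^β/(2^{β+γ} − 2))`. -/
theorem stieltjes_integral_sup_bound
    (X g : ℝ → ℝ) (β γ L T s t N₁ N₂ I : ℝ)
    (hβ : 0 < β) (hβ1 : β ≤ 1) (hγ : 0 < γ) (hγ1 : γ ≤ 1) (hβγ : 1 < β + γ)
    (hT : 0 < T) (hL : 0 < L)
    (hg : ∀ t₁ ∈ Icc (0 : ℝ) T, ∀ t₂ ∈ Icc (0 : ℝ) T, |g t₂ - g t₁| ≤ L * |t₂ - t₁| ^ γ)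
    (hN₁ : ∀ u ∈ Icc (0 : ℝ) T, |X u| ≤ N₁)
    (hN₂ : ∀ t₁ ∈ Icc (0 : ℝ) T, ∀ t₂ ∈ Icc (0 : ℝ) T, |X t₂ - X t₁| ≤ N₂ * |t₂ - t₁| ^ β)
    (hs : 0 ≤ s) (hst : s ≤ t) (htT : t ≤ T)
    (hI : IsRSIntegral X g s t I) :
    |I| ≤ L * (N₁ + N₂) * (t - s) ^ γ * (1 + (t - s) ^ β / ((2 : ℝ) ^ (β + γ) - 2)) := by
  have h2c : (2 : ℝ) < 2 ^ (β + γ) := by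
    have : (2:ℝ) ^ (1:ℝ) < 2 ^ (β + γ) :=
      Real.rpow_lt_rpow_left_iff (by norm_num : (1:ℝ) < 2) |>.2 hβγ
    simpa using this
  have hN₁0 : 0 ≤ N₁ := (abs_nonneg _).trans (hN₁ s ⟨hs, hst.trans htT⟩)
  have hN₂0 : 0 ≤ N₂ := by
    have h1 := (abs_nonneg (X T - X 0)).trans
      (hN₂ 0 ⟨le_rfl, hT.le⟩ T ⟨hT.le, le_rfl⟩)
    have h2 : (0:ℝ) < |T - 0| ^ β :=
      Real.rpow_pos_of_pos (by rw [sub_zero, abs_of_pos hT]; exact hT) β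
    nlinarith
  rcases eq_or_lt_of_le hst with rfl | hlt
  · -- degenerate case t = s
    have hI0 : |I| ≤ 0 := by
      apply le_of_forall_pos_le_add
      intro ε hε
      obtain ⟨δ, hδ, H⟩ := hI ε hε
      have h0 := H 0 (fun _ => s) monotone_const rfl rfl (fun i => i.elim0)
      have hRS : RSsum X g 0 (fun _ => s) = 0 := by simp [RSsum]
      rw [hRS, zero_sub, abs_neg] at h0
      linarith
    have : (s - s) ^ γ = 0 := by
      rw [sub_self]; exact Real.zero_rpow hγ.ne'
    rw [this]
    simpa using hI0
  -- main case s < t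
  have hts : 0 < t - s := sub_pos.2 hlt
  set c := β + γ with hc
  set x : ℝ := 2 ^ (1 - c) with hx
  have hx0 : 0 < x := Real.rpow_pos_of_pos two_pos _
  have hx1 : x < 1 := Real.rpow_lt_one_of_one_lt_of_neg (by norm_num) (by linarith)
  have hx2c : x * 2 ^ c = 2 := by
    rw [hx, ← Real.rpow_add two_pos]
    norm_num
  set P : ℕ → ℕ → ℝ := fun k i => s + i * ((t - s) / 2 ^ k) with hP
  have hPd : ∀ k i, P k (i + 1) - P k i = (t - s) / 2 ^ k := by
    intro k i
    simp only [hP]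
    push_cast
    ring
  have hh0 : ∀ k : ℕ, 0 < (t - s) / 2 ^ k := fun k => div_pos hts (by positivity)
  have hPmem : ∀ k i, i ≤ 2 ^ k → P k i ∈ Icc (0:ℝ) T := by
    intro k i hi
    constructor
    · have : 0 ≤ (i:ℝ) * ((t - s) / 2 ^ k) := by positivity
      simp only [hP]; linarith
    · have h1 : (i:ℝ) * ((t - s) / 2 ^ k) ≤ (2 ^ k : ℝ) * ((t - s) / 2 ^ k) := by
        apply mul_le_mul_of_nonneg_right _ (hh0 k).le
        exact_mod_cast Nat.cast_le.2 hi
      have h2 : (2 ^ k : ℝ) * ((t - s) / 2 ^ k) = t - s := by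
        field_simp
      simp only [hP]
      linarith
  have hPhalf : ∀ k i, P (k + 1) (2 * i) = P k i := by
    intro k i
    simp only [hP]
    rw [pow_succ]
    push_cast
    ring
  set S : ℕ → ℝ := fun k => ∑ i ∈ range (2 ^ k),
      X (P k i) * (g (P k (i + 1)) - g (P k i)) with hS
  -- bound on level-0 sum
  set A : ℝ := L * N₁ * (t - s) ^ γ with hA
  set C : ℝ := L * N₂ * (t - s) ^ c with hC
  have hC0 : 0 ≤ C := by
    have := Real.rpow_pos_of_pos hts c
    positivity
  have hS0 : |S 0| ≤ A := by
    have e0 : P 0 0 = s := by simp [hP]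
    have e1 : P 0 1 = t := by simp [hP]
    have : S 0 = X s * (g t - g s) := by
      simp [hS, e0, e1]
    rw [this, abs_mul]
    have h1 : |X s| ≤ N₁ := hN₁ s ⟨hs, hst.trans htT⟩
    have h2 : |g t - g s| ≤ L * |t - s| ^ γ :=
      hg s ⟨hs, hst.trans htT⟩ t ⟨hs.trans hst, htT⟩
    rw [abs_of_pos hts] at h2
    have := Real.rpow_pos_of_pos hts γ
    calc |X s| * |g t - g s| ≤ N₁ * (L * (t - s) ^ γ) := by
          apply mul_le_mul h1 h2 (abs_nonneg _) hN₁0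
      _ = A := by rw [hA]; ring
  -- step bound
  have hstep : ∀ k, |S (k + 1) - S k| ≤ C * ((1/2) * x ^ (k + 1)) := by
    intro k
    have h2k : 2 ^ (k + 1) = 2 * 2 ^ k := by ring
    set h' : ℝ := (t - s) / 2 ^ (k + 1) with hh'
    have hh'0 : 0 < h' := hh0 (k + 1)
    have hsplit : S (k + 1) = ∑ i ∈ range (2 ^ k),
        (X (P (k+1) (2*i)) * (g (P (k+1) (2*i+1)) - g (P (k+1) (2*i)))
         + X (P (k+1) (2*i+1)) * (g (P (k+1) (2*i+1+1)) - g (P (k+1) (2*i+1)))) := by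
      rw [hS]
      simp only
      rw [h2k, sum_range_two_mul']
    have hdiff : S (k + 1) - S k = ∑ i ∈ range (2 ^ k),
        (X (P (k+1) (2*i+1)) - X (P k i)) * (g (P k (i+1)) - g (P (k+1) (2*i+1))) := by
      rw [hsplit, hS]
      simp only
      rw [← Finset.sum_sub_distrib]
      apply Finset.sum_congr rfl
      intro i _
      have e1 : P (k+1) (2*i) = P k i := hPhalf k i
      have e2 : P (k+1) (2*i+1+1) = P k (i+1) := by
        have : 2*i+1+1 = 2*(i+1) := by ring
        rw [this, hPhalf]
      rw [e1, e2]
      ring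
    rw [hdiff]
    have hterm : ∀ i ∈ range (2 ^ k),
        |(X (P (k+1) (2*i+1)) - X (P k i)) * (g (P k (i+1)) - g (P (k+1) (2*i+1)))|
          ≤ L * N₂ * h' ^ c := by
      intro i hi
      rw [Finset.mem_range] at hi
      have hi1 : 2*i+1 ≤ 2 ^ (k+1) := by omega
      have hi2 : i + 1 ≤ 2 ^ k := hi
      have hm1 : P (k+1) (2*i+1) ∈ Icc (0:ℝ) T := hPmem _ _ hi1
      have hm2 : P k i ∈ Icc (0:ℝ) T := hPmem _ _ (by omega)
      have hm3 : P k (i+1) ∈ Icc (0:ℝ) T := hPmem _ _ hi2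
      have d1 : P (k+1) (2*i+1) - P k i = h' := by
        rw [← hPhalf k i]; exact hPd (k+1) (2*i)
      have d2 : P k (i+1) - P (k+1) (2*i+1) = h' := by
        have e2 : P (k+1) (2*(i+1)) = P k (i+1) := hPhalf k (i+1)
        have : 2*(i+1) = (2*i+1)+1 := by ring
        rw [← e2, this]
        exact hPd (k+1) (2*i+1)
      have hX : |X (P (k+1) (2*i+1)) - X (P k i)| ≤ N₂ * h' ^ β := by
        have := hN₂ (P k i) hm2 (P (k+1) (2*i+1)) hm1
        rwa [d1, abs_of_pos hh'0] at this
      have hg' : |g (P k (i+1)) - g (P (k+1) (2*i+1))| ≤ L * h' ^ γ := by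
        have := hg (P (k+1) (2*i+1)) hm1 (P k (i+1)) hm3
        rwa [d2, abs_of_pos hh'0] at this
      rw [abs_mul]
      calc |X (P (k+1) (2*i+1)) - X (P k i)| * |g (P k (i+1)) - g (P (k+1) (2*i+1))|
          ≤ (N₂ * h' ^ β) * (L * h' ^ γ) := by
            apply mul_le_mul hX hg' (abs_nonneg _) (by positivity)
        _ = L * N₂ * h' ^ c := by
            rw [hc, Real.rpow_add hh'0]; ring
    calc |∑ i ∈ range (2 ^ k),
        (X (P (k+1) (2*i+1)) - X (P k i)) * (g (P k (i+1)) - g (P (k+1) (2*i+1)))|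
        ≤ ∑ i ∈ range (2 ^ k), |(X (P (k+1) (2*i+1)) - X (P k i)) * (g (P k (i+1)) - g (P (k+1) (2*i+1)))| :=
          Finset.abs_sum_le_sum_abs _ _
      _ ≤ ∑ _i ∈ range (2 ^ k), L * N₂ * h' ^ c := Finset.sum_le_sum hterm
      _ = (2 ^ k : ℝ) * (L * N₂ * h' ^ c) := by
          rw [Finset.sum_const, Finset.card_range]; push_cast; ring
      _ = C * ((1/2) * x ^ (k + 1)) := by
          have h2cpos : (0:ℝ) < 2 ^ c := Real.rpow_pos_of_pos two_pos c
          have hbc : ((2:ℝ) ^ (k+1) : ℝ) ^ c = ((2:ℝ) ^ c) ^ (k+1) := by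
            rw [← Real.rpow_natCast (2:ℝ) (k+1), ← Real.rpow_natCast ((2:ℝ)^c) (k+1),
              ← Real.rpow_mul (by norm_num : (0:ℝ) ≤ 2),
              ← Real.rpow_mul (by norm_num : (0:ℝ) ≤ 2), mul_comm]
          have hxx : (1/2 : ℝ) * x ^ (k+1) = (2:ℝ)^k / ((2:ℝ)^c)^(k+1) := by
            rw [eq_div_iff (ne_of_gt (pow_pos h2cpos _))]
            calc (1/2 : ℝ) * x^(k+1) * ((2:ℝ)^c)^(k+1)
                = (1/2 : ℝ) * (x * 2^c)^(k+1) := by rw [mul_pow]; ring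
              _ = (1/2 : ℝ) * 2^(k+1) := by rw [hx2c]
              _ = 2^k := by rw [pow_succ]; ring
          rw [hh', Real.div_rpow hts.le (by positivity), hbc, hC, hxx]
          field_simp
  -- cumulative bound
  have hSk : ∀ k, |S k| ≤ A + C * ∑ j ∈ range k, (1/2) * x ^ (j + 1) := by
    intro k
    induction k with
    | zero => simpa using hS0
    | succ k ih =>
      have h1 : |S (k+1)| ≤ |S k| + |S (k+1) - S k| := by
        have := abs_add_le (S k) (S (k+1) - S k)
        simpa using this
      rw [Finset.sum_range_succ, mul_add]
      calc |S (k+1)| ≤ |S k| + |S (k+1) - S k| := h1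
        _ ≤ (A + C * ∑ j ∈ range k, (1/2) * x ^ (j + 1)) + C * ((1/2) * x ^ (k + 1)) := by
            exact add_le_add ih (hstep k)
        _ = A + (C * ∑ j ∈ range k, (1/2) * x ^ (j + 1) + C * ((1/2) * x ^ (k+1))) := by ring
  -- geometric bound
  have hgeom : ∀ k, (∑ j ∈ range k, (1/2) * x ^ (j + 1)) ≤ 1 / (2 ^ c - 2) := by
    intro k
    have hsum : ∑ j ∈ range k, (1/2) * x ^ (j + 1) = (x/2) * ∑ j ∈ range k, x ^ j := by
      rw [Finset.mul_sum]
      apply Finset.sum_congr rfl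
      intro j _
      rw [pow_succ]
      ring
    have hxk : 0 ≤ x ^ k := by positivity
    have h1x : 0 < 1 - x := by linarith
    have h2c' : (0:ℝ) < 2 ^ c - 2 := by linarith
    have hge : ∑ j ∈ range k, x ^ j ≤ 1 / (1 - x) := by
      rw [geom_sum_eq hx1.ne]
      have e : (x ^ k - 1)/(x - 1) = (1 - x ^ k)/(1 - x) := by
        rw [← neg_div_neg_eq]; ring_nf
      rw [e, div_le_div_iff₀ h1x h1x]
      nlinarith
    have heq : (x/2) * (1/(1-x)) = 1/((2:ℝ) ^ c - 2) := by
      rw [div_mul_div_comm, mul_one,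
        div_eq_div_iff (by linarith : (2:ℝ)*(1-x) ≠ 0) (ne_of_gt h2c')]
      linear_combination hx2c
    calc ∑ j ∈ range k, (1/2) * x ^ (j + 1)
        = (x/2) * ∑ j ∈ range k, x ^ j := hsum
      _ ≤ (x/2) * (1/(1-x)) := mul_le_mul_of_nonneg_left hge (by positivity)
      _ = 1/((2:ℝ) ^ c - 2) := heq
  have hB : ∀ k, |S k| ≤ A + C * (1 / (2 ^ c - 2)) := by
    intro k
    refine (hSk k).trans (add_le_add (le_refl A) ?_)
    exact mul_le_mul_of_nonneg_left (hgeom k) hC0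
  -- final: |I| ≤ bound via ε argument
  have hfinal : |I| ≤ A + C * (1 / (2 ^ c - 2)) := by
    apply le_of_forall_pos_le_add
    intro ε hε
    obtain ⟨δ, hδ, H⟩ := hI ε hε
    obtain ⟨k, hk⟩ := exists_pow_lt_of_lt_one (x := δ / (t - s)) (div_pos hδ hts)
      (by norm_num : (1:ℝ)/2 < 1)
    have hp2 : (0:ℝ) < 2 ^ k := by positivity
    have hmesh : (t - s) / 2 ^ k < δ := by
      rw [lt_div_iff₀ hts] at hk
      rw [div_lt_iff₀ hp2]
      have e2 : ((1:ℝ)/2) ^ k * (t - s) * 2 ^ k = t - s := by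
        rw [mul_right_comm, ← mul_pow]
        norm_num
      linarith [mul_lt_mul_of_pos_right hk hp2, e2]
    set τ : Fin (2 ^ k + 1) → ℝ := fun i => P k i.val with hτ
    have hmono : Monotone τ := by
      intro a b hab
      simp only [hτ, hP]
      have : (a.val : ℝ) ≤ b.val := Nat.cast_le.2 (Fin.le_def.1 hab)
      have := mul_le_mul_of_nonneg_right this (hh0 k).le
      linarith
    have ht0 : τ 0 = s := by simp [hτ, hP]
    have htl : τ (Fin.last (2 ^ k)) = t := by
      simp only [hτ, hP, Fin.val_last]
      field_simp
      push_cast; ring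
    have hmeshi : ∀ i : Fin (2 ^ k), τ i.succ - τ i.castSucc < δ := by
      intro i
      have : τ i.succ - τ i.castSucc = (t - s) / 2 ^ k := by
        simp only [hτ, Fin.val_succ, Fin.coe_castSucc]
        exact hPd k i.val
      rw [this]; exact hmesh
    have hRS : RSsum X g (2 ^ k) τ = S k := by
      rw [RSsum, hS]
      beta_reduce
      rw [← Fin.sum_univ_eq_sum_range (fun i => X (P k i) * (g (P k (i+1)) - g (P k i))) (2^k)]
      apply Finset.sum_congr rfl
      intro i _
      simp [hτ, Fin.val_succ, Fin.coe_castSucc]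
    have := H (2 ^ k) τ hmono ht0 htl hmeshi
    rw [hRS] at this
    have h1 : |I| ≤ |S k| + |S k - I| := by
      have := abs_sub_abs_le_abs_sub I (S k)
      have h2 := abs_sub_comm I (S k)
      calc |I| = |S k - (S k - I)| := by ring_nf
        _ ≤ |S k| + |S k - I| := abs_sub _ _
    calc |I| ≤ |S k| + |S k - I| := h1
      _ ≤ (A + C * (1 / (2 ^ c - 2))) + ε := add_le_add (hB k) this.le
  -- compare bound with RHS
  refine hfinal.trans ?_
  have hrg : (0:ℝ) < (t - s) ^ γ := Real.rpow_pos_of_pos hts γ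
  have hrb : (0:ℝ) < (t - s) ^ β := Real.rpow_pos_of_pos hts β
  have hrc : (t - s) ^ c = (t - s) ^ β * (t - s) ^ γ := Real.rpow_add hts β γ
  have h2c' : (0:ℝ) < 2 ^ c - 2 := by linarith
  rw [hA, hC, hrc]
  rw [mul_add, mul_one]
  have e1 : L * N₁ * (t - s) ^ γ ≤ L * (N₁ + N₂) * (t - s) ^ γ := by
    apply mul_le_mul_of_nonneg_right _ hrg.le
    nlinarith
  have e2 : L * N₂ * ((t - s) ^ β * (t - s) ^ γ) * (1 / (2 ^ c - 2))
      ≤ L * (N₁ + N₂) * (t - s) ^ γ * ((t - s) ^ β / (2 ^ c - 2)) := by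
    rw [div_eq_mul_inv, div_eq_mul_inv]
    have : (0:ℝ) ≤ (2 ^ c - 2)⁻¹ := by positivity
    have hLN : L * N₂ ≤ L * (N₁ + N₂) := by nlinarith
    calc L * N₂ * ((t - s) ^ β * (t - s) ^ γ) * (1 * (2 ^ c - 2)⁻¹)
        = (L * N₂) * ((t - s) ^ γ * ((t - s) ^ β * (2 ^ c - 2)⁻¹)) := by ring
      _ ≤ (L * (N₁ + N₂)) * ((t - s) ^ γ * ((t - s) ^ β * (2 ^ c - 2)⁻¹)) := by
          apply mul_le_mul_of_nonneg_right hLN (by positivity)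
      _ = L * (N₁ + N₂) * (t - s) ^ γ * ((t - s) ^ β * (2 ^ c - 2)⁻¹) := by ring
  linarith
end

section
/- Under the hypotheses of the self-mapping lemma, and assuming additionally that σ ∈ C¹ with ∂σ/∂t and ∂σ/∂x Lipschitz in x, there exists ε₂ > 0 such that for all t ∈ [s, s+ε₂] the operator F_t X = a + ∫ₛᵗ b(τ,X(τ)) dτ + ∫ₛᵗ σ(τ,X(τ)) dg(τ) is a strict contraction on C_K^β([s, s+ε₂]) in the Hölder norm ‖·‖_β: there exists λ < 1 with ‖F_t X − F_t Y‖_β ≤ λ‖X − Y‖_β for all X, Y ∈ C_K^β. -/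
open Set Finset intervalIntegral

/-- The Hölder norm `‖f‖_β` on `[a,b]`. -/
noncomputable def holderNormOn (f : ℝ → ℝ) (a b β : ℝ) : ℝ :=
  sSup ((fun t => |f t|) '' Icc a b) +
    sSup {q : ℝ | ∃ t₁ ∈ Icc a b, ∃ t₂ ∈ Icc a b, t₁ ≠ t₂ ∧ q = |f t₂ - f t₁| / |t₂ - t₁| ^ β}

noncomputable def NSsum (f g : ℝ → ℝ) (n : ℕ) (T : ℕ → ℝ) : ℝ :=
  ∑ i ∈ Finset.range n, f (T i) * (g (T (i + 1)) - g (T i))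

lemma RSsum_toFin (f g : ℝ → ℝ) (n : ℕ) (T : ℕ → ℝ) :
    RSsum f g n (fun i => T i.val) = NSsum f g n T := by
  rw [RSsum, NSsum, ← Fin.sum_univ_eq_sum_range (fun i => f (T i) * (g (T (i+1)) - g (T i)))]
  refine Finset.sum_congr rfl (fun i _ => ?_)
  simp [Fin.coe_castSucc, Fin.val_succ]

lemma RSsum_eq_NSsum (f g : ℝ → ℝ) (n : ℕ) (t : Fin (n + 1) → ℝ) :
    RSsum f g n t = NSsum f g n (fun i => t ⟨min i n, by omega⟩) := by
  rw [RSsum, NSsum, ← Fin.sum_univ_eq_sum_range]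
  refine Finset.sum_congr rfl (fun i _ => ?_)
  have h1 : min (i : ℕ) n = i.val := Nat.min_eq_left i.isLt.le
  have h2 : min ((i : ℕ) + 1) n = i.val + 1 := Nat.min_eq_left i.isLt
  have e1 : (⟨min (i:ℕ) n, by omega⟩ : Fin (n+1)) = i.castSucc := Fin.ext (by simp [h1])
  have e2 : (⟨min ((i:ℕ)+1) n, by omega⟩ : Fin (n+1)) = i.succ := Fin.ext (by simp [h2])
  rw [e1, e2]

lemma NSsum_congr (f g : ℝ → ℝ) (n : ℕ) (T T' : ℕ → ℝ) (h : ∀ i ≤ n, T i = T' i) :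
    NSsum f g n T = NSsum f g n T' := by
  refine Finset.sum_congr rfl (fun i hi => ?_)
  rw [Finset.mem_range] at hi
  rw [h i hi.le, h (i+1) hi]

lemma steps_mono {T : ℕ → ℝ} {n : ℕ} (h : ∀ i < n, T i ≤ T (i + 1)) :
    ∀ {i k : ℕ}, i ≤ k → k ≤ n → T i ≤ T k := by
  intro i k hik hkn
  induction k with
  | zero => simp_all
  | succ m ih =>
    rcases Nat.eq_or_lt_of_le hik with h1 | h1
    · exact h1 ▸ le_refl _
    · exact le_trans (ih (Nat.lt_succ_iff.mp h1) (by omega)) (h m (by omega))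

lemma young_sum_bound (h g : ℝ → ℝ) (β γ H L u v : ℝ)
    (hβ : 0 < β) (hγ0 : 0 < γ) (hH : 0 ≤ H) (hL : 0 ≤ L)
    (hh : ∀ a ∈ Icc u v, ∀ b ∈ Icc u v, |h b - h a| ≤ H * |b - a| ^ β)
    (hgg : ∀ a ∈ Icc u v, ∀ b ∈ Icc u v, |g b - g a| ≤ L * |b - a| ^ γ) :
    ∀ n (T : ℕ → ℝ), (∀ i < n, T i ≤ T (i + 1)) → T 0 = u → T n = v →
      |NSsum h g n T - h u * (g v - g u)| ≤
        H * L * (2 * (v - u)) ^ (β + γ) * ∑ k ∈ range n, ((k : ℝ) ^ (β + γ))⁻¹ := by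
  intro n
  induction n using Nat.strong_induction_on with
  | _ n IH =>
    intro T hmono h0 hn
    have huv : u ≤ v := h0 ▸ hn ▸ steps_mono hmono (Nat.zero_le n) le_rfl
    have hrpos : (0:ℝ) ≤ H * L * (2 * (v - u)) ^ (β + γ) :=
      mul_nonneg (mul_nonneg hH hL) (Real.rpow_nonneg (by linarith) _)
    have hsumpos : ∀ m : ℕ, (0:ℝ) ≤ ∑ k ∈ range m, ((k : ℝ) ^ (β + γ))⁻¹ := by
      intro m
      refine Finset.sum_nonneg (fun k _ => ?_)
      positivity
    rcases Nat.lt_or_ge n 2 with hn2 | hn2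
    · -- base cases n = 0, 1
      have hz : NSsum h g n T - h u * (g v - g u) = 0 := by
        interval_cases n
        · have e : u = v := by rw [← h0]; exact hn
          simp [NSsum, e]
        · rw [NSsum, Finset.sum_range_one, ← h0, ← hn]
          norm_num
      rw [hz, abs_zero]
      exact mul_nonneg hrpos (hsumpos n)
    · -- n ≥ 2
      have hmem : ∀ i ≤ n, T i ∈ Icc u v := fun i hi =>
        ⟨h0 ▸ steps_mono hmono (Nat.zero_le i) hi, hn ▸ steps_mono hmono hi le_rfl⟩
      -- find a removable point
      have htel : ∑ i ∈ range (n - 1), (T (i + 2) - T i) ≤ 2 * (v - u) := by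
        have e : ∀ i, T (i+2) - T i = (T (i+1+1) - T (i+1)) + (T (i+1) - T i) := by
          intro i; ring_nf
        calc ∑ i ∈ range (n-1), (T (i + 2) - T i)
            = (∑ i ∈ range (n-1), (T (i+1+1) - T (i+1)))
              + ∑ i ∈ range (n-1), (T (i+1) - T i) := by
              rw [← Finset.sum_add_distrib]; exact Finset.sum_congr rfl (fun i _ => e i)
          _ = (T (n-1+1) - T (0+1)) + (T (n-1) - T 0) := by
              rw [Finset.sum_range_sub (fun i => T (i+1)), Finset.sum_range_sub T]
          _ ≤ 2 * (v - u) := by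
              have h1 : T (n-1+1) = v := by rw [← hn]; congr 1; omega
              have h2 : u ≤ T (0+1) := (hmem 1 (by omega)).1
              have h3 : T (n-1) ≤ v := (hmem (n-1) (by omega)).2
              rw [h1, h0]; linarith
      have hex : ∃ i < n - 1, T (i + 2) - T i ≤ 2 * (v - u) / (n - 1 : ℕ) := by
        by_contra hcon
        push_neg at hcon
        have hlt : ∀ i ∈ range (n-1), 2 * (v - u) / (n - 1 : ℕ) < T (i+2) - T i :=
          fun i hi => hcon i (Finset.mem_range.mp hi)
        have hcard : (range (n-1)).Nonempty := by
          rw [Finset.nonempty_range_iff]; omega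
        have hlt2 := Finset.sum_lt_sum_of_nonempty hcard hlt
        rw [Finset.sum_const, Finset.card_range, nsmul_eq_mul] at hlt2
        have hne : ((n - 1 : ℕ) : ℝ) ≠ 0 := Nat.cast_ne_zero.mpr (by omega)
        rw [mul_div_cancel₀ _ hne] at hlt2
        linarith [htel]
      obtain ⟨j0, hj0, hjle⟩ := hex
      set j := j0 + 1 with hj
      -- removed partition
      set T' : ℕ → ℝ := fun i => if i < j then T i else T (i + 1) with hT'
      have hT'mono : ∀ i < n - 1, T' i ≤ T' (i + 1) := by
        intro i hi
        simp only [hT']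
        by_cases h1 : i + 1 < j
        · rw [if_pos (by omega), if_pos h1]; exact hmono i (by omega)
        · by_cases h2 : i < j
          · rw [if_pos h2, if_neg h1]
            exact le_trans (hmono i (by omega)) (hmono (i+1) (by omega))
          · rw [if_neg h2, if_neg h1]; exact hmono (i+1) (by omega)
      have hT'0 : T' 0 = u := by simp only [hT']; rw [if_pos (by omega)]; exact h0
      have hT'n : T' (n - 1) = v := by
        simp only [hT']; rw [if_neg (by omega)]
        rw [← hn]; congr 1; omega
      have hIH := IH (n-1) (by omega) T' hT'mono hT'0 hT'n
      -- sum difference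
      have hdiff : NSsum h g n T - NSsum h g (n-1) T' =
          (h (T j) - h (T (j-1))) * (g (T (j+1)) - g (T j)) := by
        have hsplit1 : NSsum h g n T =
            (∑ i ∈ range (j-1), h (T i) * (g (T (i+1)) - g (T i)))
            + h (T (j-1)) * (g (T j) - g (T (j-1)))
            + h (T j) * (g (T (j+1)) - g (T j))
            + ∑ i ∈ Finset.Ico (j+1) n, h (T i) * (g (T (i+1)) - g (T i)) := by
          rw [NSsum, Finset.range_eq_Ico,
            ← Finset.sum_Ico_consecutive _ (Nat.zero_le (j-1)) (show j-1 ≤ n by omega),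
            Finset.sum_eq_sum_Ico_succ_bot (show j-1 < n by omega),
            Finset.sum_eq_sum_Ico_succ_bot (show j-1+1 < n by omega)]
          have e1 : j - 1 + 1 = j := by omega
          rw [e1, ← Finset.range_eq_Ico]
          ring
        have eA : ∑ i ∈ range (j-1), h (T' i) * (g (T' (i+1)) - g (T' i))
            = ∑ i ∈ range (j-1), h (T i) * (g (T (i+1)) - g (T i)) := by
          refine Finset.sum_congr rfl (fun i hi => ?_)
          rw [Finset.mem_range] at hi
          simp only [hT']
          rw [if_pos (by omega), if_pos (by omega)]
        have eB : h (T' (j-1)) * (g (T' (j-1+1)) - g (T' (j-1)))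
            = h (T (j-1)) * (g (T (j+1)) - g (T (j-1))) := by
          simp only [hT']
          rw [if_pos (by omega), if_neg (by omega)]
          have e : j - 1 + 1 + 1 = j + 1 := by omega
          rw [e]
        have eC : ∑ i ∈ Finset.Ico (j-1+1) (n-1), h (T' i) * (g (T' (i+1)) - g (T' i))
            = ∑ i ∈ Finset.Ico (j+1) n, h (T i) * (g (T (i+1)) - g (T i)) := by
          have e1 : j - 1 + 1 = j := by omega
          rw [e1]
          have hc : ∀ i ∈ Finset.Ico j (n-1),
              h (T' i) * (g (T' (i+1)) - g (T' i))
                = h (T (i+1)) * (g (T (i+1+1)) - g (T (i+1))) := by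
            intro i hi
            rw [Finset.mem_Ico] at hi
            simp only [hT']
            rw [if_neg (by omega), if_neg (by omega)]
          rw [Finset.sum_congr rfl hc, Finset.sum_Ico_eq_sum_range,
            Finset.sum_Ico_eq_sum_range]
          have e2 : n - 1 - j = n - (j+1) := by omega
          rw [e2]
          refine Finset.sum_congr rfl (fun i _ => ?_)
          have e3 : j + i + 1 = j + 1 + i := by omega
          rw [e3]
        have hsplit2 : NSsum h g (n-1) T' =
            (∑ i ∈ range (j-1), h (T i) * (g (T (i+1)) - g (T i)))
            + h (T (j-1)) * (g (T (j+1)) - g (T (j-1)))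
            + ∑ i ∈ Finset.Ico (j+1) n, h (T i) * (g (T (i+1)) - g (T i)) := by
          rw [NSsum, Finset.range_eq_Ico,
            ← Finset.sum_Ico_consecutive _ (Nat.zero_le (j-1)) (show j-1 ≤ n-1 by omega),
            Finset.sum_eq_sum_Ico_succ_bot (show j-1 < n-1 by omega),
            ← Finset.range_eq_Ico, eA, eB, eC]
          ring
        rw [hsplit1, hsplit2]
        ring
      -- bound the removed term
      set m := 2 * (v - u) / (n - 1 : ℕ) with hmdef
      have hm : (0:ℝ) ≤ m := div_nonneg (by linarith) (Nat.cast_nonneg _)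
      have hgap1' : (0:ℝ) ≤ T j - T (j-1) := by
        have := steps_mono hmono (show j-1 ≤ j by omega) (show j ≤ n by omega)
        linarith
      have hgap2' : (0:ℝ) ≤ T (j+1) - T j := by
        have := hmono j (by omega); linarith
      have hTj1 : T (j - 1) = T j0 := by congr 1
      have hTj2 : T (j + 1) = T (j0 + 2) := by congr 1
      have hgap1 : T j - T (j-1) ≤ m := by
        have h2 : T j ≤ T (j0 + 2) := steps_mono hmono (by omega) (by omega)
        rw [hTj1]; linarith [hjle]
      have hgap2 : T (j+1) - T j ≤ m := by
        have h1 : T j0 ≤ T j := steps_mono hmono (by omega) (by omega)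
        rw [hTj2]; linarith [hjle]
      have hterm : |(h (T j) - h (T (j-1))) * (g (T (j+1)) - g (T j))| ≤
          H * L * (2 * (v - u)) ^ (β + γ) * (((n - 1 : ℕ) : ℝ) ^ (β + γ))⁻¹ := by
        rw [abs_mul]
        have b1 : |h (T j) - h (T (j-1))| ≤ H * |T j - T (j-1)| ^ β :=
          hh _ (hmem (j-1) (by omega)) _ (hmem j (by omega))
        have b2 : |g (T (j+1)) - g (T j)| ≤ L * |T (j+1) - T j| ^ γ :=
          hgg _ (hmem j (by omega)) _ (hmem (j+1) (by omega))
        have c1 : |T j - T (j-1)| ^ β ≤ m ^ β := by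
          rw [abs_of_nonneg hgap1']
          exact Real.rpow_le_rpow hgap1' hgap1 hβ.le
        have c2 : |T (j+1) - T j| ^ γ ≤ m ^ γ := by
          rw [abs_of_nonneg hgap2']
          exact Real.rpow_le_rpow hgap2' hgap2 hγ0.le
        have step : |h (T j) - h (T (j-1))| * |g (T (j+1)) - g (T j)| ≤
            H * m ^ β * (L * m ^ γ) := by
          have hb1 : |h (T j) - h (T (j-1))| ≤ H * m ^ β :=
            le_trans b1 (mul_le_mul_of_nonneg_left c1 hH)
          have hb2 : |g (T (j+1)) - g (T j)| ≤ L * m ^ γ :=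
            le_trans b2 (mul_le_mul_of_nonneg_left c2 hL)
          exact mul_le_mul hb1 hb2 (abs_nonneg _) (by positivity)
        refine le_trans step ?_
        have hmm : H * m ^ β * (L * m ^ γ) = H * L * m ^ (β + γ) := by
          rw [Real.rpow_add' hm (by positivity)]; ring
        rw [hmm, hmdef, Real.div_rpow (by linarith) (Nat.cast_nonneg _)]
        rw [div_eq_mul_inv]
        apply le_of_eq
        ring
      -- combine
      have hfin : NSsum h g n T - h u * (g v - g u) =
          (NSsum h g (n-1) T' - h u * (g v - g u)) +
          (h (T j) - h (T (j-1))) * (g (T (j+1)) - g (T j)) := by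
        rw [← hdiff]; ring
      have hsum : ∑ k ∈ range n, ((k : ℝ) ^ (β + γ))⁻¹ =
          (∑ k ∈ range (n-1), ((k : ℝ) ^ (β + γ))⁻¹)
            + (((n - 1 : ℕ) : ℝ) ^ (β + γ))⁻¹ := by
        have e : n = (n - 1) + 1 := by omega
        conv_lhs => rw [e]
        rw [Finset.sum_range_succ]
      rw [hfin]
      refine le_trans (abs_add_le _ _) ?_
      rw [hsum, mul_add]
      exact add_le_add hIH hterm

lemma IsRSIntegral.sub {f₁ f₂ g : ℝ → ℝ} {a b I₁ I₂ : ℝ}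
    (h₁ : IsRSIntegral f₁ g a b I₁) (h₂ : IsRSIntegral f₂ g a b I₂) :
    IsRSIntegral (fun x => f₁ x - f₂ x) g a b (I₁ - I₂) := by
  intro ε hε
  obtain ⟨δ₁, hδ₁, H₁⟩ := h₁ (ε/2) (by linarith)
  obtain ⟨δ₂, hδ₂, H₂⟩ := h₂ (ε/2) (by linarith)
  refine ⟨min δ₁ δ₂, lt_min hδ₁ hδ₂, fun n t hm h0 hl hmesh => ?_⟩
  have e : RSsum (fun x => f₁ x - f₂ x) g n t = RSsum f₁ g n t - RSsum f₂ g n t := by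
    rw [RSsum, RSsum, RSsum, ← Finset.sum_sub_distrib]
    exact Finset.sum_congr rfl (fun i _ => by ring)
  have b₁ := H₁ n t hm h0 hl (fun i => lt_of_lt_of_le (hmesh i) (min_le_left _ _))
  have b₂ := H₂ n t hm h0 hl (fun i => lt_of_lt_of_le (hmesh i) (min_le_right _ _))
  rw [e]
  calc |RSsum f₁ g n t - RSsum f₂ g n t - (I₁ - I₂)|
      = |(RSsum f₁ g n t - I₁) - (RSsum f₂ g n t - I₂)| := by ring_nf
    _ ≤ |RSsum f₁ g n t - I₁| + |RSsum f₂ g n t - I₂| := abs_sub _ _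
    _ < ε := by linarith

lemma IsRSIntegral.self_eq_zero {f g : ℝ → ℝ} {a I : ℝ}
    (h : IsRSIntegral f g a a I) : I = 0 := by
  by_contra hI
  obtain ⟨δ, hδ, H⟩ := h (|I|) (abs_pos.mpr hI)
  have := H 0 (fun _ => a) (fun _ _ _ => le_rfl) rfl rfl
    (fun i => by simpa using hδ)
  simp [RSsum] at this

lemma toFin_monotone {T : ℕ → ℝ} {n : ℕ} (h : ∀ i, T i ≤ T (i + 1)) :
    Monotone (fun i : Fin (n + 1) => T i.val) := by
  intro i k hik
  exact steps_mono (fun i _ => h i) (Fin.le_def.mp hik) (Nat.lt_succ_iff.mp k.isLt)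

lemma NSsum_add (f g : ℝ → ℝ) (m k : ℕ) (T : ℕ → ℝ) :
    NSsum f g (m + k) T = NSsum f g m T + NSsum f g k (fun i => T (m + i)) := by
  rw [NSsum, NSsum, NSsum, Finset.sum_range_add]
  simp [Nat.add_assoc]

lemma rs_increment_bound (h g : ℝ → ℝ) (β γ H L s t₁ t₂ I₁ I₂ Z : ℝ)
    (hβ : 0 < β) (hγ0 : 0 < γ) (hH : 0 ≤ H) (hL : 0 ≤ L)
    (hst : s ≤ t₁) (ht12 : t₁ ≤ t₂)
    (hh : ∀ a ∈ Icc t₁ t₂, ∀ b ∈ Icc t₁ t₂, |h b - h a| ≤ H * |b - a| ^ β)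
    (hgg : ∀ a ∈ Icc t₁ t₂, ∀ b ∈ Icc t₁ t₂, |g b - g a| ≤ L * |b - a| ^ γ)
    (hI₁ : IsRSIntegral h g s t₁ I₁) (hI₂ : IsRSIntegral h g s t₂ I₂)
    (hZ : ∀ n, ∑ k ∈ range n, ((k : ℝ) ^ (β + γ))⁻¹ ≤ Z) :
    |I₂ - I₁ - h t₁ * (g t₂ - g t₁)| ≤ H * L * (2 * (t₂ - t₁)) ^ (β + γ) * Z := by
  refine le_of_forall_pos_le_add (fun ε hε => ?_)
  obtain ⟨δ₁, hδ₁, H₁⟩ := hI₁ (ε/2) (by linarith)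
  obtain ⟨δ₂, hδ₂, H₂⟩ := hI₂ (ε/2) (by linarith)
  set δ := min δ₁ δ₂ with hδdef
  have hδ : 0 < δ := lt_min hδ₁ hδ₂
  set N := ⌈(t₂ - s)/δ⌉₊ + 1 with hN
  have hN0 : 0 < N := by omega
  have hNr : (0:ℝ) < N := by exact_mod_cast hN0
  have hNδ : t₂ - s < N * δ := by
    have h2 := Nat.le_ceil ((t₂ - s)/δ)
    have h3 : ((⌈(t₂ - s)/δ⌉₊ : ℕ) : ℝ) < N := by exact_mod_cast Nat.lt_succ_self _
    have h1 : (t₂ - s)/δ < N := lt_of_le_of_lt h2 h3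
    calc t₂ - s = ((t₂ - s)/δ) * δ := (div_mul_cancel₀ _ (ne_of_gt hδ)).symm
      _ < N * δ := mul_lt_mul_of_pos_right h1 hδ
  set d₁ := (t₁ - s)/N with hd₁def
  set d₂ := (t₂ - t₁)/N with hd₂def
  have hd₁0 : 0 ≤ d₁ := div_nonneg (by linarith) hNr.le
  have hd₂0 : 0 ≤ d₂ := div_nonneg (by linarith) hNr.le
  have hd₁δ : d₁ < δ := by
    rw [hd₁def, div_lt_iff₀ hNr]
    calc t₁ - s ≤ t₂ - s := by linarith
      _ < N * δ := hNδ
      _ = δ * N := by ring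
  have hd₂δ : d₂ < δ := by
    rw [hd₂def, div_lt_iff₀ hNr]
    calc t₂ - t₁ ≤ t₂ - s := by linarith
      _ < N * δ := hNδ
      _ = δ * N := by ring
  set W : ℕ → ℝ := fun i => if i < N then s + i * d₁ else t₁ + ((i - N : ℕ) : ℝ) * d₂
    with hW
  have hWN : ∀ i ≤ N, W i = s + i * d₁ := by
    intro i hi
    rcases Nat.lt_or_ge i N with h1 | h1
    · simp only [hW]; rw [if_pos h1]
    · have hEq : i = N := by omega
      subst hEq
      simp only [hW]; rw [if_neg (by omega)]
      have hz : ((N - N : ℕ) : ℝ) = 0 := by simp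
      rw [hz, hd₁def]
      field_simp; ring
  have hWshift : ∀ i, W (N + i) = t₁ + i * d₂ := by
    intro i
    simp only [hW]
    rw [if_neg (by omega)]
    congr 2
    push_cast [show N + i - N = i by omega]
    ring
  have hWstep : ∀ i, W i ≤ W (i + 1) := by
    intro i
    rcases Nat.lt_or_ge (i+1) (N+1) with h1 | h1
    · rw [hWN i (by omega), hWN (i+1) (by omega)]
      push_cast
      nlinarith [hd₁0]
    · have e1 : W i = t₁ + ((i - N : ℕ) : ℝ) * d₂ := by
        have := hWshift (i - N); rwa [show N + (i - N) = i by omega] at this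
      have e2 : W (i + 1) = t₁ + (((i - N : ℕ) : ℝ) + 1) * d₂ := by
        have := hWshift (i - N + 1)
        rw [show N + (i - N + 1) = i + 1 by omega] at this
        rw [this]; push_cast; ring
      rw [e1, e2]
      nlinarith [hd₂0]
  have hWmesh : ∀ i, W (i + 1) - W i < δ := by
    intro i
    rcases Nat.lt_or_ge (i+1) (N+1) with h1 | h1
    · rw [hWN i (by omega), hWN (i+1) (by omega)]
      push_cast
      calc s + ((i:ℝ) + 1) * d₁ - (s + i * d₁) = d₁ := by ring
        _ < δ := hd₁δ
    · have e1 : W i = t₁ + ((i - N : ℕ) : ℝ) * d₂ := by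
        have := hWshift (i - N); rwa [show N + (i - N) = i by omega] at this
      have e2 : W (i + 1) = t₁ + (((i - N : ℕ) : ℝ) + 1) * d₂ := by
        have := hWshift (i - N + 1)
        rw [show N + (i - N + 1) = i + 1 by omega] at this
        rw [this]; push_cast; ring
      rw [e1, e2]
      have ee : t₁ + (((i - N : ℕ) : ℝ) + 1) * d₂ - (t₁ + ((i - N : ℕ) : ℝ) * d₂) = d₂ := by
        ring
      rw [ee]; exact hd₂δ
  -- apply the two integral hypotheses
  have hmono₁ : Monotone (fun i : Fin (N+1) => W i.val) := toFin_monotone hWstep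
  have hmono₂ : Monotone (fun i : Fin (N+N+1) => W i.val) := toFin_monotone hWstep
  have h0₁ : (fun i : Fin (N+1) => W i.val) 0 = s := by
    show W 0 = s
    rw [hWN 0 (by omega)]; simp
  have h0₂ : (fun i : Fin (N+N+1) => W i.val) 0 = s := by
    show W 0 = s
    rw [hWN 0 (by omega)]; simp
  have hl₁ : (fun i : Fin (N+1) => W i.val) (Fin.last N) = t₁ := by
    show W N = t₁
    rw [hWN N le_rfl, hd₁def]; field_simp; ring
  have hl₂ : (fun i : Fin (N+N+1) => W i.val) (Fin.last (N+N)) = t₂ := by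
    show W (N+N) = t₂
    rw [hWshift N, hd₂def]; field_simp; ring
  have hmesh₁ : ∀ i : Fin N,
      (fun i : Fin (N+1) => W i.val) i.succ - (fun i : Fin (N+1) => W i.val) i.castSucc
        < δ₁ := by
    intro i
    show W (i.val + 1) - W i.val < δ₁
    exact lt_of_lt_of_le (hWmesh i.val) (min_le_left _ _)
  have hmesh₂ : ∀ i : Fin (N+N),
      (fun i : Fin (N+N+1) => W i.val) i.succ - (fun i : Fin (N+N+1) => W i.val) i.castSucc
        < δ₂ := by
    intro i
    show W (i.val + 1) - W i.val < δ₂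
    exact lt_of_lt_of_le (hWmesh i.val) (min_le_right _ _)
  have hA := H₁ N _ hmono₁ h0₁ hl₁ hmesh₁
  have hB := H₂ (N+N) _ hmono₂ h0₂ hl₂ hmesh₂
  rw [RSsum_toFin] at hA
  rw [RSsum_toFin, NSsum_add] at hB
  -- Young bound on [t₁, t₂]
  have hV0 : (fun i : ℕ => W (N+i)) 0 = t₁ := by
    show W (N+0) = t₁
    rw [hWshift 0]; simp
  have hVN : (fun i : ℕ => W (N+i)) N = t₂ := by
    show W (N+N) = t₂
    rw [hWshift N, hd₂def]; field_simp; ring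
  have hVsteps : ∀ i < N, (fun i : ℕ => W (N+i)) i ≤ (fun i : ℕ => W (N+i)) (i+1) := by
    intro i _
    show W (N+i) ≤ W (N+(i+1))
    have := hWstep (N+i)
    rwa [show N+i+1 = N+(i+1) from rfl] at this
  have hY := young_sum_bound h g β γ H L t₁ t₂ hβ hγ0 hH hL hh hgg N
    (fun i => W (N+i)) hVsteps hV0 hVN
  have hcoef : (0:ℝ) ≤ H * L * (2 * (t₂ - t₁)) ^ (β + γ) :=
    mul_nonneg (mul_nonneg hH hL) (Real.rpow_nonneg (by linarith) _)
  have hYZ : |NSsum h g N (fun i => W (N+i)) - h t₁ * (g t₂ - g t₁)| ≤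
      H * L * (2 * (t₂ - t₁)) ^ (β + γ) * Z :=
    le_trans hY (mul_le_mul_of_nonneg_left (hZ N) hcoef)
  have key : |I₂ - I₁ - h t₁ * (g t₂ - g t₁)| ≤
      |NSsum h g N (fun i => W (N+i)) - h t₁ * (g t₂ - g t₁)|
      + |NSsum h g N W - I₁|
      + |NSsum h g N W + NSsum h g N (fun i => W (N+i)) - I₂| := by
    set A := NSsum h g N W
    set Bv := NSsum h g N (fun i => W (N+i))
    have e : I₂ - I₁ - h t₁ * (g t₂ - g t₁) =
        ((Bv - h t₁ * (g t₂ - g t₁)) + (A - I₁)) - (A + Bv - I₂) := by ring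
    rw [e]
    calc |(Bv - h t₁ * (g t₂ - g t₁)) + (A - I₁) - (A + Bv - I₂)|
        ≤ |(Bv - h t₁ * (g t₂ - g t₁)) + (A - I₁)| + |A + Bv - I₂| := abs_sub _ _
      _ ≤ |Bv - h t₁ * (g t₂ - g t₁)| + |A - I₁| + |A + Bv - I₂| := by
          have := abs_add_le (Bv - h t₁ * (g t₂ - g t₁)) (A - I₁)
          linarith
  linarith [key, hYZ, hA, hB]

lemma sigma_diff_bound (σ σx : ℝ → ℝ → ℝ) (S : ℝ)
    (hσdx : ∀ t x : ℝ, HasDerivAt (fun y => σ t y) (σx t x) x)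
    (hσ1 : ∀ t x₁ x₂ : ℝ, |σ t x₂ - σ t x₁| ≤ S * |x₂ - x₁|)
    (hσx_t : ∀ t₁ t₂ x : ℝ, σx t₁ x = σx t₂ x)
    (hσx_lip : ∀ t x₁ x₂ : ℝ, |σx t x₂ - σx t x₁| ≤ S * |x₂ - x₁|)
    (hS : 0 ≤ S) :
    ∀ τ₁ τ₂ x₁ y₁ x₂ y₂ : ℝ,
      |(σ τ₂ x₂ - σ τ₂ y₂) - (σ τ₁ x₁ - σ τ₁ y₁)| ≤
        S * |y₂ - y₁| * |x₂ - y₂| + S * |(x₂ - y₂) - (x₁ - y₁)| := by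
  intro τ₁ τ₂ x₁ y₁ x₂ y₂
  -- step 1: σ τ₂ · - σ τ₁ · is constant
  have hconst : ∀ x y : ℝ, σ τ₂ x - σ τ₁ x = σ τ₂ y - σ τ₁ y := by
    intro x y
    have hd : ∀ z : ℝ, HasDerivAt (fun w => σ τ₂ w - σ τ₁ w) 0 z := by
      intro z
      have := (hσdx τ₂ z).sub (hσdx τ₁ z)
      rwa [hσx_t τ₂ τ₁ z, sub_self] at this
    exact is_const_of_deriv_eq_zero (fun z => (hd z).differentiableAt)
      (fun z => (hd z).deriv) x y
  have hswap : σ τ₂ x₂ - σ τ₂ y₂ = σ τ₁ x₂ - σ τ₁ y₂ := by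
    have := hconst x₂ y₂
    linarith
  rw [hswap]
  set f : ℝ → ℝ := σ τ₁ with hf
  set φ : ℝ → ℝ := σx τ₁ with hφ
  have hφbd : ∀ z : ℝ, |φ z| ≤ S := by
    intro z
    have := HasDerivAt.le_of_lip' (hσdx τ₁ z) hS
      (Filter.Eventually.of_forall (fun y => by
        simpa [Real.norm_eq_abs] using hσ1 τ₁ z y))
    simpa [Real.norm_eq_abs] using this
  have hφlip : LipschitzWith S.toNNReal φ := by
    apply LipschitzWith.of_dist_le_mul
    intro a b
    rw [Real.dist_eq, Real.dist_eq, Real.coe_toNNReal _ hS]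
    exact hσx_lip τ₁ b a
  have hφcont : Continuous φ := hφlip.continuous
  have hφint : ∀ a b : ℝ, IntervalIntegrable φ MeasureTheory.volume a b :=
    fun a b => hφcont.intervalIntegrable a b
  have hftc : ∀ a b : ℝ, f b - f a = ∫ v in a..b, φ v := by
    intro a b
    exact (intervalIntegral.integral_eq_sub_of_hasDerivAt
      (fun x _ => hσdx τ₁ x) (hφint a b)).symm
  set d := y₂ - y₁ with hd
  set c₂ := y₁ + (x₂ - y₂) with hc₂
  have htrans : (∫ v in y₂..x₂, φ v) = ∫ v in y₁..c₂, φ (v + d) := by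
    rw [intervalIntegral.integral_comp_add_right]
    have e1 : y₁ + d = y₂ := by rw [hd]; ring
    have e2 : c₂ + d = x₂ := by rw [hc₂, hd]; ring
    rw [e1, e2]
  have hQ : (f x₂ - f y₂) - (f x₁ - f y₁) =
      (∫ v in y₁..c₂, (φ (v + d) - φ v)) + ∫ v in x₁..c₂, φ v := by
    have hint2 : IntervalIntegrable (fun v => φ (v + d)) MeasureTheory.volume y₁ c₂ := by
      exact (hφcont.comp (continuous_add_right d)).intervalIntegrable _ _
    have hsplit : (∫ v in y₁..c₂, (φ (v + d) - φ v))
        = (∫ v in y₁..c₂, φ (v + d)) - ∫ v in y₁..c₂, φ v :=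
      intervalIntegral.integral_sub hint2 (hφint _ _)
    have hsub : (∫ v in y₁..c₂, φ v) - (∫ v in y₁..x₁, φ v) = ∫ v in x₁..c₂, φ v :=
      intervalIntegral.integral_interval_sub_left (hφint _ _) (hφint _ _)
    rw [hftc y₂ x₂, hftc y₁ x₁, htrans]
    linarith [hsplit, hsub]
  have hb1 : |∫ v in y₁..c₂, (φ (v + d) - φ v)| ≤ S * |d| * |x₂ - y₂| := by
    have := intervalIntegral.norm_integral_le_of_norm_le_const
      (C := S * |d|) (f := fun v => φ (v + d) - φ v) (a := y₁) (b := c₂)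
      (fun v _ => by
        have := hσx_lip τ₁ v (v + d)
        simpa [Real.norm_eq_abs, add_sub_cancel_left] using this)
    rw [Real.norm_eq_abs] at this
    have he : |c₂ - y₁| = |x₂ - y₂| := by rw [hc₂]; congr 1; ring
    rwa [he] at this
  have hb2 : |∫ v in x₁..c₂, φ v| ≤ S * |(x₂ - y₂) - (x₁ - y₁)| := by
    have := intervalIntegral.norm_integral_le_of_norm_le_const
      (C := S) (f := φ) (a := x₁) (b := c₂)
      (fun v _ => by simpa [Real.norm_eq_abs] using hφbd v)
    rw [Real.norm_eq_abs] at this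
    have he : |c₂ - x₁| = |(x₂ - y₂) - (x₁ - y₁)| := by rw [hc₂]; congr 1; ring
    rwa [he] at this
  calc |(f x₂ - f y₂) - (f x₁ - f y₁)|
      = |(∫ v in y₁..c₂, (φ (v + d) - φ v)) + ∫ v in x₁..c₂, φ v| := by rw [hQ]
    _ ≤ |∫ v in y₁..c₂, (φ (v + d) - φ v)| + |∫ v in x₁..c₂, φ v| := abs_add_le _ _
    _ ≤ S * |y₂ - y₁| * |x₂ - y₂| + S * |(x₂ - y₂) - (x₁ - y₁)| := by
        rw [← hd]; exact add_le_add hb1 hb2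

lemma holder_continuousOn (X : ℝ → ℝ) (K β lo hi : ℝ) (hβ : 0 < β)
    (hX : ∀ t₁ ∈ Icc lo hi, ∀ t₂ ∈ Icc lo hi, |X t₂ - X t₁| ≤ K * |t₂ - t₁| ^ β) :
    ContinuousOn X (Icc lo hi) := by
  intro t ht
  have hsq : Filter.Tendsto (fun u => dist (X u) (X t)) (nhdsWithin t (Icc lo hi))
      (nhds 0) := by
    refine squeeze_zero' (g := fun u => K * |u - t| ^ β)
      (Filter.Eventually.of_forall (fun u => dist_nonneg)) ?_ ?_
    · filter_upwards [self_mem_nhdsWithin] with u hu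
      rw [Real.dist_eq]
      exact hX t ht u hu
    · have h1 : ContinuousAt (fun u : ℝ => K * |u - t| ^ β) t :=
        continuousAt_const.mul
          (((continuous_abs.comp (continuous_sub_right t)).continuousAt).rpow_const
            (Or.inr hβ.le))
      have h0 : K * |t - t| ^ β = 0 := by
        simp [Real.zero_rpow (ne_of_gt hβ)]
      have h2 := h1.continuousWithinAt (s := Icc lo hi)
      rw [ContinuousWithinAt, h0] at h2
      exact h2
  exact tendsto_iff_dist_tendsto_zero.mpr hsq

lemma lip_comp_continuousOn (b : ℝ → ℝ → ℝ) (B : ℝ) (X : ℝ → ℝ) (s : Set ℝ)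
    (hb : ∀ t₁ x₁ t₂ x₂ : ℝ, |b t₂ x₂ - b t₁ x₁| ≤ B * (|t₂ - t₁| + |x₂ - x₁|))
    (hX : ContinuousOn X s) : ContinuousOn (fun τ => b τ (X τ)) s := by
  intro t ht
  have h := hX t ht
  have hsq : Filter.Tendsto (fun u => dist (b u (X u)) (b t (X t))) (nhdsWithin t s)
      (nhds 0) := by
    refine squeeze_zero' (g := fun u => B * (|u - t| + |X u - X t|))
      (Filter.Eventually.of_forall (fun u => dist_nonneg)) ?_ ?_
    · refine Filter.Eventually.of_forall (fun u => ?_)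
      rw [Real.dist_eq]
      exact hb t (X t) u (X u)
    · have h2 : Filter.Tendsto (fun u => B * (|u - t| + |X u - X t|)) (nhdsWithin t s)
          (nhds (B * (|t - t| + |X t - X t|))) := by
        apply Filter.Tendsto.const_mul
        apply Filter.Tendsto.add
        · exact ((continuous_abs.comp (continuous_sub_right t)).continuousAt).continuousWithinAt
        · exact (h.sub continuousWithinAt_const).abs
      simpa using h2
  exact tendsto_iff_dist_tendsto_zero.mpr hsq

lemma riemann_diff_bound (b : ℝ → ℝ → ℝ) (B M lo hi t₁ t₂ : ℝ) (X Y : ℝ → ℝ)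
    (hB : 0 ≤ B)
    (hb : ∀ t₁ x₁ t₂ x₂ : ℝ, |b t₂ x₂ - b t₁ x₁| ≤ B * (|t₂ - t₁| + |x₂ - x₁|))
    (hXc : ContinuousOn (fun τ => b τ (X τ)) (Icc lo hi))
    (hYc : ContinuousOn (fun τ => b τ (Y τ)) (Icc lo hi))
    (ht₁ : t₁ ∈ Icc lo hi) (ht₂ : t₂ ∈ Icc lo hi) (h12 : t₁ ≤ t₂)
    (hM : ∀ τ ∈ Icc lo hi, |X τ - Y τ| ≤ M) :
    |(∫ τ in lo..t₂, b τ (X τ)) - (∫ τ in lo..t₁, b τ (X τ))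
      - ((∫ τ in lo..t₂, b τ (Y τ)) - (∫ τ in lo..t₁, b τ (Y τ)))| ≤ B * M * (t₂ - t₁) := by
  have hlo : lo ≤ t₁ := ht₁.1
  have hsub : ∀ u v : ℝ, u ∈ Icc lo hi → v ∈ Icc lo hi → u ≤ v →
      Set.uIcc u v ⊆ Icc lo hi := by
    intro u v hu hv huv
    rw [Set.uIcc_of_le huv]
    exact Set.Icc_subset_Icc hu.1 hv.2
  have hXi : ∀ u v : ℝ, u ∈ Icc lo hi → v ∈ Icc lo hi → u ≤ v →
      IntervalIntegrable (fun τ => b τ (X τ)) MeasureTheory.volume u v :=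
    fun u v hu hv huv => (hXc.mono (hsub u v hu hv huv)).intervalIntegrable
  have hYi : ∀ u v : ℝ, u ∈ Icc lo hi → v ∈ Icc lo hi → u ≤ v →
      IntervalIntegrable (fun τ => b τ (Y τ)) MeasureTheory.volume u v :=
    fun u v hu hv huv => (hYc.mono (hsub u v hu hv huv)).intervalIntegrable
  have hlom : lo ∈ Icc lo hi := ⟨le_refl _, le_trans hlo ht₁.2⟩
  have eX : (∫ τ in lo..t₂, b τ (X τ)) - (∫ τ in lo..t₁, b τ (X τ))
      = ∫ τ in t₁..t₂, b τ (X τ) :=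
    intervalIntegral.integral_interval_sub_left (hXi lo t₂ hlom ht₂ (le_trans hlo h12))
      (hXi lo t₁ hlom ht₁ hlo)
  have eY : (∫ τ in lo..t₂, b τ (Y τ)) - (∫ τ in lo..t₁, b τ (Y τ))
      = ∫ τ in t₁..t₂, b τ (Y τ) :=
    intervalIntegral.integral_interval_sub_left (hYi lo t₂ hlom ht₂ (le_trans hlo h12))
      (hYi lo t₁ hlom ht₁ hlo)
  rw [eX, eY, ← intervalIntegral.integral_sub (hXi t₁ t₂ ht₁ ht₂ h12)
    (hYi t₁ t₂ ht₁ ht₂ h12)]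
  have hbd := intervalIntegral.norm_integral_le_of_norm_le_const
    (C := B * M) (f := fun τ => b τ (X τ) - b τ (Y τ)) (a := t₁) (b := t₂)
    (fun τ hτ => by
      rw [Set.uIoc_of_le h12] at hτ
      have hmem : τ ∈ Icc lo hi := ⟨le_trans ht₁.1 hτ.1.le, le_trans hτ.2 ht₂.2⟩
      have h1 : |b τ (X τ) - b τ (Y τ)| ≤ B * (|τ - τ| + |X τ - Y τ|) :=
        hb τ (Y τ) τ (X τ)
      have h2 : |X τ - Y τ| ≤ M := hM τ hmem
      rw [Real.norm_eq_abs]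
      simp only [sub_self, abs_zero, zero_add] at h1
      exact le_trans h1 (mul_le_mul_of_nonneg_left h2 hB))
  rw [Real.norm_eq_abs, abs_of_nonneg (by linarith : (0:ℝ) ≤ t₂ - t₁)] at hbd
  exact hbd

set_option maxHeartbeats 1000000

/-- Contraction lemma: the integral operator
`F X (t) = a + ∫ₛᵗ b(τ,X(τ)) dτ + ∫ₛᵗ σ(τ,X(τ)) dg(τ)` is a strict contraction
in the Hölder norm on `C_K^β([s,s+ε₂])` for some `ε₂ > 0`. -/
theorem integral_operator_contraction
    (b σ σt σx : ℝ → ℝ → ℝ) (g : ℝ → ℝ) (γ T K L s a : ℝ)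
    (hγ : 1 / 2 < γ) (hγ1 : γ ≤ 1) (hT : 0 < T) (hK : 0 < K) (hL : 0 < L)
    (hb : ∃ B : ℝ, ∀ t₁ x₁ t₂ x₂ : ℝ,
      |b t₂ x₂ - b t₁ x₁| ≤ B * (|t₂ - t₁| + |x₂ - x₁|))
    (hσdt : ∀ t x : ℝ, HasDerivAt (fun u => σ u x) (σt t x) t)
    (hσdx : ∀ t x : ℝ, HasDerivAt (fun y => σ t y) (σx t x) x)
    (hσ : ∃ S : ℝ, ∀ t₁ x₁ t₂ x₂ : ℝ,
      |σ t₂ x₂ - σ t₁ x₁| ≤ S * (|t₂ - t₁| + |x₂ - x₁|) ∧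
      |σt t₂ x₂ - σt t₁ x₁| ≤ S * |x₂ - x₁| ∧
      |σx t₂ x₂ - σx t₁ x₁| ≤ S * |x₂ - x₁|)
    (hg : ∀ t₁ ∈ Icc (0 : ℝ) T, ∀ t₂ ∈ Icc (0 : ℝ) T, |g t₂ - g t₁| ≤ L * |t₂ - t₁| ^ γ)
    (hs : s ∈ Ico (0 : ℝ) T) :
    ∀ β : ℝ, 1 - γ < β → β < γ →
      ∃ ε₂ > (0 : ℝ), s + ε₂ ≤ T ∧ ∃ lam : ℝ, lam < 1 ∧ 0 ≤ lam ∧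
        ∀ X Y : ℝ → ℝ,
          (∀ t₁ ∈ Icc s (s + ε₂), ∀ t₂ ∈ Icc s (s + ε₂),
            |X t₂ - X t₁| ≤ K * |t₂ - t₁| ^ β) →
          (∀ t₁ ∈ Icc s (s + ε₂), ∀ t₂ ∈ Icc s (s + ε₂),
            |Y t₂ - Y t₁| ≤ K * |t₂ - t₁| ^ β) →
          ∀ FX FY : ℝ → ℝ,
            (∀ t ∈ Icc s (s + ε₂), ∃ I : ℝ,
              IsRSIntegral (fun τ => σ τ (X τ)) g s t I ∧
              FX t = a + (∫ τ in s..t, b τ (X τ)) + I) →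
            (∀ t ∈ Icc s (s + ε₂), ∃ I : ℝ,
              IsRSIntegral (fun τ => σ τ (Y τ)) g s t I ∧
              FY t = a + (∫ τ in s..t, b τ (Y τ)) + I) →
            holderNormOn (fun t => FX t - FY t) s (s + ε₂) β ≤
              lam * holderNormOn (fun t => X t - Y t) s (s + ε₂) β := by
  intro β hβ1 hβ2
  obtain ⟨B0, hB0⟩ := hb
  obtain ⟨S, hS⟩ := hσ
  -- basic facts about the constants
  set B := max B0 0 with hBdef
  have hBnn : 0 ≤ B := le_max_right _ _
  have hbB : ∀ t₁ x₁ t₂ x₂ : ℝ, |b t₂ x₂ - b t₁ x₁| ≤ B * (|t₂ - t₁| + |x₂ - x₁|) :=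
    fun t₁ x₁ t₂ x₂ => le_trans (hB0 t₁ x₁ t₂ x₂)
      (mul_le_mul_of_nonneg_right (le_max_left _ _) (by positivity))
  have hSnn : 0 ≤ S := by
    have h1 := (hS 0 0 0 1).2.2
    have h0 := abs_nonneg (σx 0 1 - σx 0 0)
    have : (0:ℝ) ≤ S * |1 - 0| := le_trans h0 h1
    simpa using this
  have hσ1 : ∀ t x₁ x₂ : ℝ, |σ t x₂ - σ t x₁| ≤ S * |x₂ - x₁| := by
    intro t x₁ x₂
    have h1 := (hS t x₁ t x₂).1
    simpa using h1
  have hσx_lip : ∀ t x₁ x₂ : ℝ, |σx t x₂ - σx t x₁| ≤ S * |x₂ - x₁| :=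
    fun t x₁ x₂ => (hS t x₁ t x₂).2.2
  have hσx_t : ∀ t₁ t₂ x : ℝ, σx t₁ x = σx t₂ x := by
    intro t₁ t₂ x
    have h1 := (hS t₂ x t₁ x).2.2
    rw [sub_self, abs_zero, mul_zero] at h1
    exact sub_eq_zero.mp (abs_eq_zero.mp (le_antisymm h1 (abs_nonneg _)))
  -- exponents
  have hβpos : 0 < β := by linarith
  have hβlt1 : β < 1 := by linarith
  have hγpos : 0 < γ := by linarith
  set p := β + γ with hpdef
  have hp1 : 1 < p := by simp only [hpdef]; linarith
  have hppos : 0 < p := by linarith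
  -- the zeta-like sum
  set Z := ∑' k : ℕ, (((k : ℝ)) ^ p)⁻¹ with hZdef
  have hZsum : Summable (fun k : ℕ => (((k : ℝ)) ^ p)⁻¹) :=
    Real.summable_nat_rpow_inv.mpr hp1
  have hZ : ∀ n : ℕ, ∑ k ∈ range n, (((k : ℝ)) ^ p)⁻¹ ≤ Z :=
    fun n => Summable.sum_le_tsum (range n) (fun i _ => by positivity) hZsum
  have hZnn : 0 ≤ Z := tsum_nonneg (fun i => by positivity)
  -- constants
  set C₃ : ℝ := S * (K + 1) * L * 2 ^ p * Z with hC₃def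
  have hC₃nn : 0 ≤ C₃ := by
    have h2p : (0:ℝ) ≤ 2 ^ p := Real.rpow_nonneg (by norm_num) _
    have : (0:ℝ) ≤ S * (K+1) := mul_nonneg hSnn (by linarith)
    positivity
  set C₄ : ℝ := B + S * L + C₃ with hC₄def
  have hC₄nn : 0 ≤ C₄ := by
    have : 0 ≤ S * L := mul_nonneg hSnn hL.le
    simp only [hC₄def]; linarith
  set q₀ := min (1 - β) (min (γ - β) γ) with hq₀def
  have hq₀pos : 0 < q₀ := by
    simp only [hq₀def, lt_min_iff]
    refine ⟨by linarith, by linarith, by linarith⟩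
  have hq₀1 : q₀ ≤ 1 - β := min_le_left _ _
  have hq₀2 : q₀ ≤ γ - β := le_trans (min_le_right _ _) (min_le_left _ _)
  have hq₀3 : q₀ ≤ γ := le_trans (min_le_right _ _) (min_le_right _ _)
  set c := 2 * C₄ + 1 with hcdef
  have hcpos : 0 < c := by simp only [hcdef]; linarith
  set ε₂ := min (T - s) (min 1 ((1/c) ^ (q₀⁻¹))) with hε₂def
  have hε₂pos : 0 < ε₂ := by
    simp only [hε₂def, lt_min_iff]
    refine ⟨by linarith [hs.2], by norm_num, ?_⟩
    exact Real.rpow_pos_of_pos (by positivity) _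
  have hε₂1 : ε₂ ≤ 1 := le_trans (min_le_right _ _) (min_le_left _ _)
  have hε₂T : s + ε₂ ≤ T := by
    have := min_le_left (T - s) (min 1 ((1/c) ^ (q₀⁻¹)))
    simp only [← hε₂def] at this
    linarith
  have hε₂q : ε₂ ^ q₀ ≤ 1 / c := by
    have h1 : ε₂ ≤ (1/c) ^ (q₀⁻¹) := le_trans (min_le_right _ _) (min_le_right _ _)
    have h2 : ε₂ ^ q₀ ≤ ((1/c) ^ (q₀⁻¹)) ^ q₀ :=
      Real.rpow_le_rpow hε₂pos.le h1 hq₀pos.le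
    rwa [← Real.rpow_mul (by positivity), inv_mul_cancel₀ (ne_of_gt hq₀pos),
      Real.rpow_one] at h2
  set lam := 2 * C₄ * ε₂ ^ q₀ with hlamdef
  have hεq₀nn : 0 ≤ ε₂ ^ q₀ := Real.rpow_nonneg hε₂pos.le _
  have hlamnn : 0 ≤ lam := by positivity
  have hlam1 : lam < 1 := by
    have h1 : lam ≤ 2 * C₄ * (1/c) :=
      mul_le_mul_of_nonneg_left hε₂q (by positivity)
    have h2 : 2 * C₄ * (1/c) < 1 := by
      rw [mul_one_div, div_lt_one hcpos]
      simp only [hcdef]; linarith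
    linarith
  refine ⟨ε₂, hε₂pos, hε₂T, lam, hlam1, hlamnn, ?_⟩
  intro X Y hX hY FX FY hFX hFY
  -- the interval
  set J := Icc s (s + ε₂) with hJdef
  have hsJ : s ∈ J := ⟨le_refl _, by linarith⟩
  have hsε₂J : s + ε₂ ∈ J := ⟨by linarith, le_refl _⟩
  have hJT : J ⊆ Icc (0:ℝ) T := fun t ht => ⟨le_trans hs.1 ht.1, le_trans ht.2 hε₂T⟩
  -- norms of D := X - Y
  set A := (fun t => |X t - Y t|) '' J with hAdef
  set Q := {q : ℝ | ∃ t₁ ∈ J, ∃ t₂ ∈ J, t₁ ≠ t₂ ∧ q = |(X t₂ - Y t₂) - (X t₁ - Y t₁)| / |t₂ - t₁| ^ β}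
    with hQdef
  set Nsup := sSup A with hNsupdef
  set Nq := sSup Q with hNqdef
  have hAne : A.Nonempty := ⟨|X s - Y s|, s, hsJ, rfl⟩
  have hQne : Q.Nonempty := by
    refine ⟨_, s, hsJ, s + ε₂, hsε₂J, by intro h; linarith [hε₂pos, congrArg id h], rfl⟩
  have hAbdd : BddAbove A := by
    refine ⟨|X s - Y s| + 2 * K * ε₂ ^ β, fun q hq => ?_⟩
    obtain ⟨t, ht, rfl⟩ := hq
    have h1 : |X t - X s| ≤ K * |t - s| ^ β := hX s hsJ t ht
    have h2 : |Y t - Y s| ≤ K * |t - s| ^ β := hY s hsJ t ht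
    have h3 : |t - s| ^ β ≤ ε₂ ^ β := by
      apply Real.rpow_le_rpow (abs_nonneg _) _ hβpos.le
      rw [abs_of_nonneg (by linarith [ht.1] : (0:ℝ) ≤ t - s)]
      linarith [ht.2]
    have h4 : |X t - Y t| ≤ |X s - Y s| + |X t - X s| + |Y t - Y s| := by
      have := abs_add_le (X s - Y s + (X t - X s)) (-(Y t - Y s))
      have e : X t - Y t = (X s - Y s + (X t - X s)) + -(Y t - Y s) := by ring
      rw [e]
      calc |(X s - Y s + (X t - X s)) + -(Y t - Y s)|
          ≤ |X s - Y s + (X t - X s)| + |-(Y t - Y s)| := abs_add_le _ _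
        _ ≤ |X s - Y s| + |X t - X s| + |Y t - Y s| := by
            rw [abs_neg]
            linarith [abs_add_le (X s - Y s) (X t - X s)]
    have h5 : |X t - X s| ≤ K * ε₂ ^ β := le_trans h1 (mul_le_mul_of_nonneg_left h3 hK.le)
    have h6 : |Y t - Y s| ≤ K * ε₂ ^ β := le_trans h2 (mul_le_mul_of_nonneg_left h3 hK.le)
    linarith [h4]
  have hQbdd : BddAbove Q := by
    refine ⟨2 * K, fun q hq => ?_⟩
    obtain ⟨t₁, ht₁, t₂, ht₂, hne, rfl⟩ := hq
    have hpow : (0:ℝ) < |t₂ - t₁| ^ β :=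
      Real.rpow_pos_of_pos (abs_pos.mpr (sub_ne_zero.mpr (Ne.symm hne))) _
    rw [div_le_iff₀ hpow]
    have h1 : |X t₂ - X t₁| ≤ K * |t₂ - t₁| ^ β := hX t₁ ht₁ t₂ ht₂
    have h2 : |Y t₂ - Y t₁| ≤ K * |t₂ - t₁| ^ β := hY t₁ ht₁ t₂ ht₂
    calc |(X t₂ - Y t₂) - (X t₁ - Y t₁)| = |(X t₂ - X t₁) + -(Y t₂ - Y t₁)| := by ring_nf
      _ ≤ |X t₂ - X t₁| + |Y t₂ - Y t₁| := by
          have := abs_add_le (X t₂ - X t₁) (-(Y t₂ - Y t₁))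
          rwa [abs_neg] at this
      _ ≤ 2 * K * |t₂ - t₁| ^ β := by linarith
  have hDbd : ∀ t ∈ J, |X t - Y t| ≤ Nsup := fun t ht => le_csSup hAbdd ⟨t, ht, rfl⟩
  have hNsupnn : 0 ≤ Nsup := le_trans (abs_nonneg _) (hDbd s hsJ)
  have hDq : ∀ t₁ ∈ J, ∀ t₂ ∈ J, |(X t₂ - Y t₂) - (X t₁ - Y t₁)| ≤ Nq * |t₂ - t₁| ^ β := by
    intro t₁ ht₁ t₂ ht₂
    rcases eq_or_ne t₁ t₂ with he | hne
    · subst he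
      rw [sub_self, abs_zero, sub_self, abs_zero, Real.zero_rpow (ne_of_gt hβpos), mul_zero]
    · have hpow : (0:ℝ) < |t₂ - t₁| ^ β :=
        Real.rpow_pos_of_pos (abs_pos.mpr (sub_ne_zero.mpr (Ne.symm hne))) _
      have hmem : |(X t₂ - Y t₂) - (X t₁ - Y t₁)| / |t₂ - t₁| ^ β ∈ Q :=
        ⟨t₁, ht₁, t₂, ht₂, hne, rfl⟩
      have := le_csSup hQbdd hmem
      rw [div_le_iff₀ hpow] at this
      linarith
  have hNqnn : 0 ≤ Nq := by
    obtain ⟨q, hq⟩ := hQne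
    obtain ⟨t₁, ht₁, t₂, ht₂, hne, rfl⟩ := hq
    have : (0:ℝ) ≤ |(X t₂ - Y t₂) - (X t₁ - Y t₁)| / |t₂ - t₁| ^ β := by positivity
    exact le_trans this (le_csSup hQbdd ⟨t₁, ht₁, t₂, ht₂, hne, rfl⟩)
  -- the difference of the sigma-compositions
  set h : ℝ → ℝ := fun τ => σ τ (X τ) - σ τ (Y τ) with hhdef
  set H := S * (K * Nsup + Nq) with hHdef
  have hHnn : 0 ≤ H := by
    have : 0 ≤ K * Nsup := mul_nonneg hK.le hNsupnn
    have : 0 ≤ K * Nsup + Nq := by linarith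
    exact mul_nonneg hSnn this
  have hh_inc : ∀ τ₁ ∈ J, ∀ τ₂ ∈ J, |h τ₂ - h τ₁| ≤ H * |τ₂ - τ₁| ^ β := by
    intro τ₁ ht₁ τ₂ ht₂
    have hsd := sigma_diff_bound σ σx S hσdx hσ1 hσx_t hσx_lip hSnn τ₁ τ₂
      (X τ₁) (Y τ₁) (X τ₂) (Y τ₂)
    have h1 : |Y τ₂ - Y τ₁| ≤ K * |τ₂ - τ₁| ^ β := hY τ₁ ht₁ τ₂ ht₂
    have h2 : |X τ₂ - Y τ₂| ≤ Nsup := hDbd τ₂ ht₂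
    have h3 : |(X τ₂ - Y τ₂) - (X τ₁ - Y τ₁)| ≤ Nq * |τ₂ - τ₁| ^ β := hDq τ₁ ht₁ τ₂ ht₂
    have hpnn : (0:ℝ) ≤ |τ₂ - τ₁| ^ β := Real.rpow_nonneg (abs_nonneg _) _
    have hb1 : S * |Y τ₂ - Y τ₁| * |X τ₂ - Y τ₂| ≤ S * (K * |τ₂ - τ₁| ^ β) * Nsup := by
      apply mul_le_mul
      · exact mul_le_mul_of_nonneg_left h1 hSnn
      · exact h2
      · exact abs_nonneg _
      · positivity
    have hb2 : S * |(X τ₂ - Y τ₂) - (X τ₁ - Y τ₁)| ≤ S * (Nq * |τ₂ - τ₁| ^ β) :=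
      mul_le_mul_of_nonneg_left h3 hSnn
    calc |h τ₂ - h τ₁| ≤ S * |Y τ₂ - Y τ₁| * |X τ₂ - Y τ₂|
          + S * |(X τ₂ - Y τ₂) - (X τ₁ - Y τ₁)| := hsd
      _ ≤ S * (K * |τ₂ - τ₁| ^ β) * Nsup + S * (Nq * |τ₂ - τ₁| ^ β) := add_le_add hb1 hb2
      _ = H * |τ₂ - τ₁| ^ β := by rw [hHdef]; ring
  have hh_val : ∀ τ ∈ J, |h τ| ≤ S * Nsup := by
    intro τ hτ
    calc |h τ| = |σ τ (X τ) - σ τ (Y τ)| := rfl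
      _ ≤ S * |X τ - Y τ| := hσ1 τ (Y τ) (X τ)
      _ ≤ S * Nsup := mul_le_mul_of_nonneg_left (hDbd τ hτ) hSnn
  -- continuity for the Riemann part
  have hXcont : ContinuousOn X J := holder_continuousOn X K β s (s+ε₂) hβpos hX
  have hYcont : ContinuousOn Y J := holder_continuousOn Y K β s (s+ε₂) hβpos hY
  have hbXc : ContinuousOn (fun τ => b τ (X τ)) J := lip_comp_continuousOn b B X J hbB hXcont
  have hbYc : ContinuousOn (fun τ => b τ (Y τ)) J := lip_comp_continuousOn b B Y J hbB hYcont
  -- key increment bound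
  have key : ∀ t₁ ∈ J, ∀ t₂ ∈ J, t₁ ≤ t₂ →
      |(FX t₂ - FY t₂) - (FX t₁ - FY t₁)| ≤
        B * Nsup * (t₂ - t₁) + S * Nsup * L * (t₂ - t₁) ^ γ
          + H * L * 2 ^ p * Z * (t₂ - t₁) ^ p := by
    intro t₁ ht₁ t₂ ht₂ h12
    obtain ⟨I1X, hI1X, hFX1⟩ := hFX t₁ ht₁
    obtain ⟨I2X, hI2X, hFX2⟩ := hFX t₂ ht₂
    obtain ⟨I1Y, hI1Y, hFY1⟩ := hFY t₁ ht₁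
    obtain ⟨I2Y, hI2Y, hFY2⟩ := hFY t₂ ht₂
    -- Riemann part
    have hR := riemann_diff_bound b B Nsup s (s+ε₂) t₁ t₂ X Y hBnn hbB hbXc hbYc
      ht₁ ht₂ h12 hDbd
    -- RS part
    have hI1 : IsRSIntegral h g s t₁ (I1X - I1Y) := IsRSIntegral.sub hI1X hI1Y
    have hI2 : IsRSIntegral h g s t₂ (I2X - I2Y) := IsRSIntegral.sub hI2X hI2Y
    have hJsub : Icc t₁ t₂ ⊆ J := Set.Icc_subset_Icc ht₁.1 ht₂.2
    have hRS := rs_increment_bound h g β γ H L s t₁ t₂ (I1X - I1Y) (I2X - I2Y) Z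
      hβpos hγpos hHnn hL.le ht₁.1 h12
      (fun x hx y hy => hh_inc x (hJsub hx) y (hJsub hy))
      (fun x hx y hy => hg x (hJT (hJsub hx)) y (hJT (hJsub hy)))
      hI1 hI2 hZ
    -- the g-increment
    have hgb : |g t₂ - g t₁| ≤ L * (t₂ - t₁) ^ γ := by
      have := hg t₁ (hJT ht₁) t₂ (hJT ht₂)
      rwa [abs_of_nonneg (by linarith : (0:ℝ) ≤ t₂ - t₁)] at this
    have hhg : |h t₁ * (g t₂ - g t₁)| ≤ S * Nsup * (L * (t₂ - t₁) ^ γ) := by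
      rw [abs_mul]
      apply mul_le_mul (hh_val t₁ ht₁) hgb (abs_nonneg _)
      exact mul_nonneg hSnn hNsupnn
    -- put together
    have hsplit : (FX t₂ - FY t₂) - (FX t₁ - FY t₁) =
        ((∫ τ in s..t₂, b τ (X τ)) - (∫ τ in s..t₁, b τ (X τ))
          - ((∫ τ in s..t₂, b τ (Y τ)) - (∫ τ in s..t₁, b τ (Y τ))))
        + (((I2X - I2Y) - (I1X - I1Y) - h t₁ * (g t₂ - g t₁)) + h t₁ * (g t₂ - g t₁)) := by
      rw [hFX1, hFX2, hFY1, hFY2]; ring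
    have h2pow : (2 * (t₂ - t₁)) ^ p = 2 ^ p * (t₂ - t₁) ^ p :=
      Real.mul_rpow (by norm_num) (by linarith)
    rw [hsplit]
    calc |_ + (_ + _)| ≤ _ := abs_add_le _ _
      _ ≤ B * Nsup * (t₂ - t₁) + S * Nsup * L * (t₂ - t₁) ^ γ
          + H * L * 2 ^ p * Z * (t₂ - t₁) ^ p := by
        have htri := abs_add_le ((I2X - I2Y) - (I1X - I1Y) - h t₁ * (g t₂ - g t₁))
          (h t₁ * (g t₂ - g t₁))
        have hRS' : |(I2X - I2Y) - (I1X - I1Y) - h t₁ * (g t₂ - g t₁)| ≤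
            H * L * 2 ^ p * Z * (t₂ - t₁) ^ p := by
          calc |(I2X - I2Y) - (I1X - I1Y) - h t₁ * (g t₂ - g t₁)|
              ≤ H * L * (2 * (t₂ - t₁)) ^ p * Z := hRS
            _ = H * L * 2 ^ p * Z * (t₂ - t₁) ^ p := by rw [h2pow]; ring
        have e : B * Nsup * (t₂ - t₁) = B * Nsup * (t₂ - t₁) := rfl
        have : S * Nsup * (L * (t₂ - t₁) ^ γ) = S * Nsup * L * (t₂ - t₁) ^ γ := by ring
        linarith [hR, htri, hhg, hRS']
  -- F s = 0
  have hFs : FX s - FY s = 0 := by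
    obtain ⟨I0X, hI0X, hFXs⟩ := hFX s hsJ
    obtain ⟨I0Y, hI0Y, hFYs⟩ := hFY s hsJ
    rw [hFXs, hFYs, IsRSIntegral.self_eq_zero hI0X, IsRSIntegral.self_eq_zero hI0Y]
    simp [intervalIntegral.integral_same]
  have hHle : H ≤ S * (K + 1) * (Nsup + Nq) := by
    rw [hHdef]
    have h1 : K * Nsup + Nq ≤ (K + 1) * (Nsup + Nq) := by
      have e : (K + 1) * (Nsup + Nq) = K * Nsup + Nq + (K * Nq + Nsup) := by ring
      rw [e]
      linarith [mul_nonneg hK.le hNqnn, hNsupnn]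
    calc S * (K * Nsup + Nq) ≤ S * ((K + 1) * (Nsup + Nq)) :=
          mul_le_mul_of_nonneg_left h1 hSnn
      _ = S * (K + 1) * (Nsup + Nq) := by ring
  have h2pnn : (0:ℝ) ≤ (2:ℝ) ^ p := Real.rpow_nonneg (by norm_num) _
  -- transform the increment bound into the contraction form
  have hmain : ∀ Δ : ℝ, 0 < Δ → Δ ≤ ε₂ →
      B * Nsup * Δ + S * Nsup * L * Δ ^ γ + H * L * 2 ^ p * Z * Δ ^ p ≤
        C₄ * ε₂ ^ q₀ * (Nsup + Nq) * Δ ^ β := by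
    intro Δ hΔ0 hΔε
    have hΔ1 : Δ ≤ 1 := le_trans hΔε hε₂1
    have hΔβnn : (0:ℝ) ≤ Δ ^ β := Real.rpow_nonneg hΔ0.le _
    have hfac : ∀ e : ℝ, q₀ + β ≤ e → Δ ^ e ≤ ε₂ ^ q₀ * Δ ^ β := by
      intro e he
      have e1 : Δ ^ e = Δ ^ (e - β) * Δ ^ β := by
        rw [← Real.rpow_add hΔ0]; congr 1; ring
      rw [e1]
      refine mul_le_mul_of_nonneg_right ?_ hΔβnn
      calc Δ ^ (e - β) ≤ Δ ^ q₀ :=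
            Real.rpow_le_rpow_of_exponent_ge hΔ0 hΔ1 (by linarith)
        _ ≤ ε₂ ^ q₀ := Real.rpow_le_rpow hΔ0.le hΔε hq₀pos.le
    have f1 : Δ ≤ ε₂ ^ q₀ * Δ ^ β := by
      have := hfac 1 (by linarith)
      rwa [Real.rpow_one] at this
    have f2 : Δ ^ γ ≤ ε₂ ^ q₀ * Δ ^ β := hfac γ (by linarith)
    have f3 : Δ ^ p ≤ ε₂ ^ q₀ * Δ ^ β := hfac p (by simp only [hpdef]; linarith)
    have hfnn : (0:ℝ) ≤ ε₂ ^ q₀ * Δ ^ β := mul_nonneg hεq₀nn hΔβnn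
    have g1 : B * Nsup * Δ ≤ B * (Nsup + Nq) * (ε₂ ^ q₀ * Δ ^ β) := by
      have hbb : B * Nsup ≤ B * (Nsup + Nq) := mul_le_mul_of_nonneg_left (by linarith) hBnn
      exact mul_le_mul hbb f1 hΔ0.le (by positivity)
    have g2 : S * Nsup * L * Δ ^ γ ≤ S * L * (Nsup + Nq) * (ε₂ ^ q₀ * Δ ^ β) := by
      have hss : S * Nsup * L ≤ S * L * (Nsup + Nq) := by
        have e : S * L * (Nsup + Nq) = S * Nsup * L + S * L * Nq := by ring
        rw [e]
        linarith [mul_nonneg (mul_nonneg hSnn hL.le) hNqnn]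
      exact mul_le_mul hss f2 (Real.rpow_nonneg hΔ0.le _)
        (by positivity)
    have g3 : H * L * 2 ^ p * Z * Δ ^ p ≤ C₃ * (Nsup + Nq) * (ε₂ ^ q₀ * Δ ^ β) := by
      have hcc : H * L * 2 ^ p * Z ≤ C₃ * (Nsup + Nq) := by
        have h1 : H * (L * 2 ^ p * Z) ≤ (S * (K + 1) * (Nsup + Nq)) * (L * 2 ^ p * Z) :=
          mul_le_mul_of_nonneg_right hHle (by positivity)
        calc H * L * 2 ^ p * Z = H * (L * 2 ^ p * Z) := by ring
          _ ≤ (S * (K + 1) * (Nsup + Nq)) * (L * 2 ^ p * Z) := h1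
          _ = C₃ * (Nsup + Nq) := by rw [hC₃def]; ring
      have hcnn : (0:ℝ) ≤ C₃ * (Nsup + Nq) := mul_nonneg hC₃nn (by linarith)
      exact mul_le_mul hcc f3 (Real.rpow_nonneg hΔ0.le _) hcnn
    have hsum : C₄ * ε₂ ^ q₀ * (Nsup + Nq) * Δ ^ β =
        B * (Nsup + Nq) * (ε₂ ^ q₀ * Δ ^ β) + S * L * (Nsup + Nq) * (ε₂ ^ q₀ * Δ ^ β)
          + C₃ * (Nsup + Nq) * (ε₂ ^ q₀ * Δ ^ β) := by
      rw [hC₄def]; ring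
    linarith
  have hCnn : (0:ℝ) ≤ C₄ * ε₂ ^ q₀ * (Nsup + Nq) :=
    mul_nonneg (mul_nonneg hC₄nn hεq₀nn) (by linarith)
  -- bound on values
  have hFsup : ∀ t ∈ J, |FX t - FY t| ≤ C₄ * ε₂ ^ q₀ * (Nsup + Nq) := by
    intro t ht
    rcases eq_or_lt_of_le ht.1 with he | hlt
    · rw [← he, hFs, abs_zero]
      exact hCnn
    · have hkey := key s hsJ t ht (by linarith)
      rw [hFs, sub_zero] at hkey
      have hm := hmain (t - s) (by linarith) (by linarith [ht.2])
      have hβ1' : (t - s) ^ β ≤ 1 := by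
        apply Real.rpow_le_one (by linarith) _ hβpos.le
        linarith [ht.2, hε₂1]
      have : C₄ * ε₂ ^ q₀ * (Nsup + Nq) * (t - s) ^ β ≤ C₄ * ε₂ ^ q₀ * (Nsup + Nq) :=
        mul_le_of_le_one_right hCnn hβ1'
      linarith
  -- bound on difference quotients
  have hincr : ∀ u ∈ J, ∀ v ∈ J, u < v →
      |(FX v - FY v) - (FX u - FY u)| ≤ C₄ * ε₂ ^ q₀ * (Nsup + Nq) * (v - u) ^ β := by
    intro u hu v hv huv
    have hkey := key u hu v hv huv.le
    have hm := hmain (v - u) (by linarith) (by linarith [hu.1, hv.2])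
    linarith
  have hFquot : ∀ t₁ ∈ J, ∀ t₂ ∈ J, t₁ ≠ t₂ →
      |(FX t₂ - FY t₂) - (FX t₁ - FY t₁)| / |t₂ - t₁| ^ β ≤
        C₄ * ε₂ ^ q₀ * (Nsup + Nq) := by
    intro t₁ ht₁ t₂ ht₂ hne
    rcases lt_or_gt_of_ne hne with hlt | hgt
    · have := hincr t₁ ht₁ t₂ ht₂ hlt
      have hpow : (0:ℝ) < |t₂ - t₁| ^ β :=
        Real.rpow_pos_of_pos (abs_pos.mpr (sub_ne_zero.mpr (Ne.symm hne))) _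
      rw [div_le_iff₀ hpow]
      rwa [abs_of_nonneg (by linarith : (0:ℝ) ≤ t₂ - t₁)]
    · have := hincr t₂ ht₂ t₁ ht₁ hgt
      have hpow : (0:ℝ) < |t₂ - t₁| ^ β :=
        Real.rpow_pos_of_pos (abs_pos.mpr (sub_ne_zero.mpr (Ne.symm hne))) _
      rw [div_le_iff₀ hpow, abs_sub_comm]
      have he : |t₂ - t₁| = t₁ - t₂ := by
        rw [abs_sub_comm, abs_of_nonneg (by linarith : (0:ℝ) ≤ t₁ - t₂)]
      rwa [he]
  -- conclude
  have hnormD : holderNormOn (fun t => X t - Y t) s (s + ε₂) β = Nsup + Nq := rfl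
  have h1 : sSup ((fun t => |FX t - FY t|) '' Icc s (s + ε₂)) ≤
      C₄ * ε₂ ^ q₀ * (Nsup + Nq) := by
    refine Real.sSup_le (fun x hx => ?_) hCnn
    obtain ⟨t, ht, rfl⟩ := hx
    exact hFsup t ht
  have h2 : sSup {q : ℝ | ∃ t₁ ∈ Icc s (s + ε₂), ∃ t₂ ∈ Icc s (s + ε₂), t₁ ≠ t₂ ∧
      q = |(FX t₂ - FY t₂) - (FX t₁ - FY t₁)| / |t₂ - t₁| ^ β} ≤
      C₄ * ε₂ ^ q₀ * (Nsup + Nq) := by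
    refine Real.sSup_le (fun x hx => ?_) hCnn
    obtain ⟨t₁, ht₁, t₂, ht₂, hne, rfl⟩ := hx
    exact hFquot t₁ ht₁ t₂ ht₂ hne
  calc holderNormOn (fun t => FX t - FY t) s (s + ε₂) β
      = sSup ((fun t => |FX t - FY t|) '' Icc s (s + ε₂)) +
        sSup {q : ℝ | ∃ t₁ ∈ Icc s (s + ε₂), ∃ t₂ ∈ Icc s (s + ε₂), t₁ ≠ t₂ ∧
          q = |(FX t₂ - FY t₂) - (FX t₁ - FY t₁)| / |t₂ - t₁| ^ β} := rfl
    _ ≤ C₄ * ε₂ ^ q₀ * (Nsup + Nq) + C₄ * ε₂ ^ q₀ * (Nsup + Nq) := add_le_add h1 h2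
    _ = lam * (Nsup + Nq) := by rw [hlamdef]; ring
    _ = lam * holderNormOn (fun t => X t - Y t) s (s + ε₂) β := by rw [hnormD]
end
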